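/- arXiv:2003.07530 — 2 statements merged into one kernel-verified Lean document; each statement's English description precedes it below -/
import Mathlib

section
/- As an identity of formal power series in x: for every nonnegative integer r and complex parameters a, b, c with c not a nonpositive integer, (b−a−r+1)_k ≠ 0 for 0 ≤ k ≤ r, and (a−b)_r ≠ 0, one has Σ_{k=0}^{r} C(r,k) · (−1)^k · ((b)_k/(b−a−r+1)_k) · 2F1(a, b+k; c; x) = ((a)_r/(a−b)_r) · 2F1(a+r, b; c; x). -/
/-!
With `y = b - a - r + 1`, the `s`-th coefficients of both sides share the factor
`(a)_s / ((c)_s s!)`. Using `(b)_k (b+k)_s = (b)_s (b+s)_k` and `(y)_r = (y)_k (y+k)_{r-k}`, the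
remaining sum over `k` is a Chu–Vandermonde sum for falling factorials and equals
`(y - b - s)_r / (y)_r`. The reflection `(-x-n+1)_n = (-1)^n (x)_n` turns this into
`(a+s)_r / (a-b)_r`, and `(a)_s (a+s)_r = (a)_r (a+r)_s` gives the right-hand side.
-/

/-- The Pochhammer symbol (rising factorial) `(a)ₖ = a(a+1)⋯(a+k−1)`. -/
noncomputable def poch (a : ℂ) (k : ℕ) : ℂ := (ascPochhammer ℂ k).eval a

/-- The Gauss hypergeometric series `₂F₁(a,b;c;x)` as a formal power series. -/
noncomputable def gauss2F1 (a b c : ℂ) : PowerSeries ℂ :=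
  PowerSeries.mk fun s => poch a s * poch b s / (poch c s * (s.factorial : ℂ))

open Polynomial Finset

theorem descPochhammer_eval_add {R : Type*} [CommRing R] (u v : R) (n : ℕ) :
    (descPochhammer R n).eval (u + v) = ∑ k ∈ range (n + 1),
      n.choose k * (descPochhammer R k).eval u * (descPochhammer R (n - k)).eval v := by
  have eval_eq_smeval (m : ℕ) (z : R) :
      (descPochhammer R m).eval z = (descPochhammer ℤ m).smeval z := by
    rw [descPochhammer_eval_eq_ascPochhammer, descPochhammer_smeval_eq_ascPochhammer,
      ascPochhammer_smeval_eq_eval]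
  simp only [eval_eq_smeval, Ring.descPochhammer_smeval_add n (Commute.all u v), mul_assoc]
  exact Nat.sum_antidiagonal_eq_sum_range_succ (fun i j => (n.choose i : R) *
    ((descPochhammer ℤ i).smeval u * (descPochhammer ℤ j).smeval v)) n

theorem poch_add (x : ℂ) (m n : ℕ) : poch x (m + n) = poch x m * poch (x + m) n := by
  simp [poch, ← ascPochhammer_mul, eval_comp]

theorem descPochhammer_eval_eq_poch (x : ℂ) (n : ℕ) :
    (descPochhammer ℂ n).eval x = poch (x - n + 1) n :=
  descPochhammer_eval_eq_ascPochhammer ℂ x n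

theorem descPochhammer_eval_neg (x : ℂ) (n : ℕ) :
    (descPochhammer ℂ n).eval (-x) = (-1) ^ n * poch x n := by
  rw [poch, ← neg_neg x, ascPochhammer_eval_neg_eq_descPochhammer, neg_neg, ← mul_assoc,
    ← mul_pow]
  simp

theorem poch_neg_sub_add_one (x : ℂ) (n : ℕ) : poch (-x - n + 1) n = (-1) ^ n * poch x n := by
  rw [← descPochhammer_eval_eq_poch, descPochhammer_eval_neg]

theorem poch_mul_poch_comm (x : ℂ) (m n : ℕ) :
    poch x m * poch (x + m) n = poch x n * poch (x + n) m := by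
  rw [← poch_add, ← poch_add, add_comm]

theorem sum_choose_mul_neg_one_pow_mul_poch_mul_poch (x y : ℂ) (r : ℕ) :
    ∑ k ∈ range (r + 1), (r.choose k : ℂ) * (-1) ^ k * poch x k * poch (y + k) (r - k) =
      poch (y - x) r := by
  have vandermonde := descPochhammer_eval_add (-x) (y + r - 1) r
  rw [descPochhammer_eval_eq_poch, show -x + (y + r - 1) - r + 1 = y - x by ring] at vandermonde
  rw [vandermonde]
  refine sum_congr rfl fun k hk => ?_
  rw [descPochhammer_eval_neg, descPochhammer_eval_eq_poch,
    Nat.cast_sub (Nat.le_of_lt_succ (mem_range.mp hk))]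
  ring_nf

theorem sum_choose_mul_neg_one_pow_mul_poch_div_poch (x y : ℂ) (r : ℕ) (hy : poch y r ≠ 0) :
    ∑ k ∈ range (r + 1), (r.choose k : ℂ) * (-1) ^ k * poch x k / poch y k =
      poch (y - x) r / poch y r := by
  rw [← sum_choose_mul_neg_one_pow_mul_poch_mul_poch, sum_div]
  refine sum_congr rfl fun k hk => ?_
  have split : poch y r = poch y k * poch (y + k) (r - k) := by
    rw [← poch_add, Nat.add_sub_cancel' (Nat.le_of_lt_succ (mem_range.mp hk))]
  rw [split] at hy ⊢
  field_simp [left_ne_zero_of_mul hy, right_ne_zero_of_mul hy]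

theorem coeff_rearrangement (r s : ℕ) (a b : ℂ) (hab : poch (a - b) r ≠ 0) :
    ∑ k ∈ range (r + 1), (r.choose k : ℂ) * (-1) ^ k * poch b k / poch (b - a - r + 1) k *
        (poch a s * poch (b + k) s) =
      poch a r / poch (a - b) r * (poch (a + r) s * poch b s) := by
  have reflect_num : poch (b - a - r + 1 - (b + s)) r = (-1) ^ r * poch (a + s) r := by
    rw [← poch_neg_sub_add_one]; ring_nf
  have reflect_den : poch (b - a - r + 1) r = (-1) ^ r * poch (a - b) r := by
    rw [← poch_neg_sub_add_one]; ring_nf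
  have hy : poch (b - a - r + 1) r ≠ 0 := by
    rw [reflect_den]; exact mul_ne_zero (pow_ne_zero r (neg_ne_zero.mpr one_ne_zero)) hab
  calc _ = poch a s * poch b s * ∑ k ∈ range (r + 1),
          (r.choose k : ℂ) * (-1) ^ k * poch (b + s) k / poch (b - a - r + 1) k := by
        rw [mul_sum]
        refine sum_congr rfl fun k _ => ?_
        linear_combination (r.choose k : ℂ) * (-1) ^ k * poch a s / poch (b - a - r + 1) k *
          poch_mul_poch_comm b k s
    _ = poch a s * poch b s * (poch (a + s) r / poch (a - b) r) := by
        rw [sum_choose_mul_neg_one_pow_mul_poch_div_poch _ _ _ hy, reflect_num, reflect_den,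
          mul_div_mul_left _ _ (pow_ne_zero r (neg_ne_zero.mpr one_ne_zero))]
    _ = _ := by linear_combination poch b s / poch (a - b) r * poch_mul_poch_comm a s r

theorem rearrangement_2F1_general (r : ℕ) (a b c : ℂ)
    (h2 : poch (a - b) r ≠ 0) :
    ∑ k ∈ Finset.range (r + 1),
      PowerSeries.C ((r.choose k : ℂ) * (-1 : ℂ) ^ k * poch b k /
          poch (b - a - r + 1) k) * gauss2F1 a (b + k) c =
    PowerSeries.C (poch a r / poch (a - b) r) * gauss2F1 (a + r) b c := by
  ext s
  simp only [map_sum, PowerSeries.coeff_C_mul, gauss2F1, PowerSeries.coeff_mk, mul_div_assoc',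
    ← sum_div, coeff_rearrangement r s a b h2]

theorem rearrangement_2F1 (r : ℕ) (a b c : ℂ)
    (hc : ∀ n : ℕ, c ≠ -(n : ℂ))
    (h1 : ∀ k ≤ r, poch (b - a - r + 1) k ≠ 0) (h2 : poch (a - b) r ≠ 0) :
    ∑ k ∈ Finset.range (r + 1),
      PowerSeries.C ((r.choose k : ℂ) * (-1 : ℂ) ^ k * poch b k /
          poch (b - a - r + 1) k) * gauss2F1 a (b + k) c =
    PowerSeries.C (poch a r / poch (a - b) r) * gauss2F1 (a + r) b c :=
  rearrangement_2F1_general r a b c h2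
end

section
/- As an identity of formal power series in x and y: for every nonnegative integer r and complex parameters a1, a2, b1, b2, c with c not a nonpositive integer, Σ_{k=0}^{r} C(r,k) · ((b1)_k/(c)_k) · x^k · F3(a1+k, a2; b1+k, b2; c+k; x, y) = F3(a1+r, a2; b1, b2; c; x, y). -/
/-- The Appell series `F₃(a₁, a₂; b₁, b₂; c; x, y)` as a formal power series
in two variables `X 0 = x`, `X 1 = y`. -/
noncomputable def appellF3 (a1 a2 b1 b2 c : ℂ) : MvPowerSeries (Fin 2) ℂ :=
  fun e =>
    poch a1 (e 0) * poch a2 (e 1) * poch b1 (e 0) * poch b2 (e 1) /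
      (poch c (e 0 + e 1) * ((e 0).factorial : ℂ) * ((e 1).factorial : ℂ))

lemma poch_zero (a : ℂ) : poch a 0 = 1 := by simp [poch]

lemma poch_succ (a : ℂ) (n : ℕ) : poch a (n + 1) = poch a n * (a + n) := by
  simp [poch, ascPochhammer_succ_eval]

lemma poch_add_s15 (a : ℂ) (k j : ℕ) : poch a (k + j) = poch a k * poch (a + k) j := by
  induction j with
  | zero => simp [poch_zero]
  | succ j ih =>
      rw [← add_assoc, poch_succ, ih, poch_succ, mul_assoc]
      push_cast
      ring

lemma poch_succ_left (a : ℂ) (n : ℕ) : poch a (n + 1) = a * poch (a + 1) n := by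
  rw [add_comm n 1, poch_add_s15]
  simp [poch, ascPochhammer_one]

lemma poch_ne_zero (c : ℂ) (hc : ∀ n : ℕ, c ≠ -(n : ℂ)) (k : ℕ) : poch c k ≠ 0 := by
  induction k with
  | zero => simp [poch_zero]
  | succ k ih =>
      rw [poch_succ]
      refine mul_ne_zero ih fun h => hc k ?_
      linear_combination h

/-- The key combinatorial identity
`∑ₖ C(r,k) · m!/(m-k)! · (a+k)_{m-k} = (a+r)_m`. -/
lemma key (r : ℕ) : ∀ (m : ℕ) (a : ℂ),
    ∑ k ∈ Finset.range (r + 1),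
      (r.choose k : ℂ) * (m.descFactorial k : ℂ) * poch (a + k) (m - k)
      = poch (a + r) m := by
  induction r with
  | zero => intro m a; simp
  | succ r ih =>
      intro m a
      rw [Finset.sum_range_succ']
      have hsplit : ∀ i ∈ Finset.range (r + 1),
          ((r+1).choose (i+1) : ℂ) * (m.descFactorial (i+1) : ℂ) * poch (a + (i+1 : ℕ)) (m - (i+1))
          = (r.choose (i+1) : ℂ) * (m.descFactorial (i+1) : ℂ) * poch (a + (i+1 : ℕ)) (m - (i+1))
            + (r.choose i : ℂ) * (m.descFactorial (i+1) : ℂ) * poch (a + (i+1 : ℕ)) (m - (i+1)) := by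
        intro i _
        rw [Nat.choose_succ_succ']
        push_cast
        ring
      rw [Finset.sum_congr rfl hsplit, Finset.sum_add_distrib]
      have hA : (∑ i ∈ Finset.range (r + 1),
          (r.choose (i+1) : ℂ) * (m.descFactorial (i+1) : ℂ) * poch (a + (i+1 : ℕ)) (m - (i+1)))
          + ((r+1).choose 0 : ℂ) * (m.descFactorial 0 : ℂ) * poch (a + (0 : ℕ)) (m - 0)
          = poch (a + r) m := by
        rw [show ((r+1).choose 0 : ℂ) = ((r.choose 0 : ℕ) : ℂ) by simp]
        rw [← Finset.sum_range_succ'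
          (fun k => (r.choose k : ℂ) * (m.descFactorial k : ℂ) * poch (a + (k : ℕ)) (m - k)) (r+1)]
        rw [Finset.sum_range_succ, Nat.choose_succ_self]
        simpa using ih m a
      have hB : (∑ i ∈ Finset.range (r + 1),
          (r.choose i : ℂ) * (m.descFactorial (i+1) : ℂ) * poch (a + (i+1 : ℕ)) (m - (i+1)))
          = (m : ℂ) * poch (a + r + 1) (m - 1) := by
        cases m with
        | zero => simp
        | succ m' =>
            have hcongr : ∀ i ∈ Finset.range (r+1),
                (r.choose i : ℂ) * ((m'+1).descFactorial (i+1) : ℂ) * poch (a + (i+1 : ℕ)) (m' + 1 - (i+1))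
                = ((m' : ℂ) + 1) * ((r.choose i : ℂ) * (m'.descFactorial i : ℂ) * poch ((a+1) + (i : ℕ)) (m' - i)) := by
              intro i _
              rw [Nat.succ_descFactorial_succ, Nat.succ_sub_succ]
              push_cast
              ring_nf
            rw [Finset.sum_congr rfl hcongr, ← Finset.mul_sum, ih m' (a+1)]
            push_cast
            ring_nf
      rw [add_right_comm, hA, hB]
      cases m with
      | zero => push_cast; simp [poch_zero]
      | succ m' =>
          rw [Nat.succ_sub_one, poch_succ_left (a + r) m', poch_succ]
          push_cast
          ring

/-- The per-coefficient identity for `k ≤ m`. -/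
lemma term_eq (a1 a2 b1 b2 c : ℂ) (hc : ∀ n : ℕ, c ≠ -(n : ℂ))
    (r k m n : ℕ) (hkm : k ≤ m) :
    ((r.choose k : ℂ) * poch b1 k / poch c k) *
      (poch (a1 + k) (m - k) * poch a2 n * poch (b1 + k) (m - k) * poch b2 n /
        (poch (c + k) (m - k + n) * ((m - k).factorial : ℂ) * (n.factorial : ℂ)))
    = ((r.choose k : ℂ) * (m.descFactorial k : ℂ) * poch (a1 + k) (m - k)) *
      (poch b1 m * poch a2 n * poch b2 n /
        (poch c (m + n) * (m.factorial : ℂ) * (n.factorial : ℂ))) := by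
  have hb : poch b1 m = poch b1 k * poch (b1 + k) (m - k) := by
    rw [← poch_add_s15, Nat.add_sub_cancel' hkm]
  have hcp : poch c (m + n) = poch c k * poch (c + k) (m - k + n) := by
    rw [← poch_add_s15]
    congr 1
    omega
  have hf : (m.factorial : ℂ) = ((m - k).factorial : ℂ) * (m.descFactorial k : ℂ) := by
    rw [← Nat.cast_mul, Nat.factorial_mul_descFactorial hkm]
  have hck : poch c k ≠ 0 := poch_ne_zero c hc k
  have hcmn : poch c (m + n) ≠ 0 := poch_ne_zero c hc (m + n)
  have hck2 : poch (c + k) (m - k + n) ≠ 0 := fun h => hcmn (by rw [hcp, h, mul_zero])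
  have hd : (m.descFactorial k : ℂ) ≠ 0 :=
    Nat.cast_ne_zero.mpr fun h =>
      absurd hkm (not_le.mpr (Nat.descFactorial_eq_zero_iff_lt.mp h))
  have hf1 : ((m - k).factorial : ℂ) ≠ 0 := Nat.cast_ne_zero.mpr (Nat.factorial_ne_zero _)
  have hf2 : ((n).factorial : ℂ) ≠ 0 := Nat.cast_ne_zero.mpr (Nat.factorial_ne_zero _)
  rw [hb, hcp, hf]
  field_simp

theorem finite_sum_appellF3 (r : ℕ) (a1 a2 b1 b2 c : ℂ)
    (hc : ∀ n : ℕ, c ≠ -(n : ℂ)) :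
    ∑ k ∈ Finset.range (r + 1),
      (MvPowerSeries.C : ℂ →+* MvPowerSeries (Fin 2) ℂ) ((r.choose k : ℂ) * poch b1 k / poch c k) *
        (MvPowerSeries.X 0 : MvPowerSeries (Fin 2) ℂ) ^ k *
        appellF3 (a1 + k) a2 (b1 + k) b2 (c + k) =
    appellF3 (a1 + r) a2 b1 b2 c := by
  classical
  apply MvPowerSeries.ext
  intro e
  rw [map_sum]
  have hterm : ∀ k ∈ Finset.range (r + 1),
      MvPowerSeries.coeff e
        ((MvPowerSeries.C : ℂ →+* MvPowerSeries (Fin 2) ℂ) ((r.choose k : ℂ) * poch b1 k / poch c k) *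
          (MvPowerSeries.X 0 : MvPowerSeries (Fin 2) ℂ) ^ k *
          appellF3 (a1 + k) a2 (b1 + k) b2 (c + k))
      = ((r.choose k : ℂ) * ((e 0).descFactorial k : ℂ) * poch (a1 + k) (e 0 - k)) *
        (poch b1 (e 0) * poch a2 (e 1) * poch b2 (e 1) /
          (poch c (e 0 + e 1) * ((e 0).factorial : ℂ) * ((e 1).factorial : ℂ))) := by
    intro k _
    rw [mul_assoc, MvPowerSeries.coeff_C_mul, MvPowerSeries.X_pow_eq,
      MvPowerSeries.coeff_monomial_mul]
    by_cases hkm : k ≤ e 0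
    · rw [if_pos (Finsupp.single_le_iff.mpr hkm), one_mul, MvPowerSeries.coeff_apply]
      simp only [appellF3, Finsupp.tsub_apply, Finsupp.single_eq_same,
        Finsupp.single_eq_of_ne (show (1 : Fin 2) ≠ 0 by decide), Nat.sub_zero]
      exact term_eq a1 a2 b1 b2 c hc r k (e 0) (e 1) hkm
    · rw [if_neg fun h => hkm (Finsupp.single_le_iff.mp h), mul_zero]
      rw [Nat.descFactorial_eq_zero_iff_lt.mpr (lt_of_not_ge hkm)]
      push_cast
      ring
  rw [Finset.sum_congr rfl hterm, ← Finset.sum_mul, key r (e 0) a1,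
    MvPowerSeries.coeff_apply]
  simp only [appellF3]
  ring
end
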